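/- For an MA(2) process with parameters (θ₁, θ₂) in sub-region 3, i.e., 0 < θ₂ < 1, θ₁ + θ₂ > 0, θ₁ − θ₂ < 1, the quantity g_α(θ) = 1 + |1+θ₁|^α − 2|1+θ₁+θ₂|^α + |θ₁+θ₂|^α + |θ₂|^α is strictly positive when 0 < α < 1, equals zero when α = 1, and is strictly negative when 1 < α ≤ 2. -/
import Mathlib

lemma split_pow (x α : ℝ) (hx : 0 < x) : x ^ α = x * x ^ (α - 1) := by
  have : x ^ α = x ^ (1 + (α - 1)) := by ring_nf
  rw [this, Real.rpow_add hx, Real.rpow_one]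

lemma strict_sub (x y α : ℝ) (hx : 0 < x) (hy : 0 < y) (h0 : 0 < α) (h1 : α < 1) :
    (x + y) ^ α < x ^ α + y ^ α := by
  have hxy : 0 < x + y := by linarith
  rw [split_pow _ α hxy, split_pow _ α hx, split_pow _ α hy, add_mul]
  have hx' : (x + y) ^ (α - 1) < x ^ (α - 1) :=
    Real.rpow_lt_rpow_of_neg hx (by linarith) (by linarith)
  have hy' : (x + y) ^ (α - 1) < y ^ (α - 1) :=
    Real.rpow_lt_rpow_of_neg hy (by linarith) (by linarith)
  nlinarith [hx, hy]

lemma strict_super (x y α : ℝ) (hx : 0 < x) (hy : 0 < y) (h0 : 1 < α) :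
    x ^ α + y ^ α < (x + y) ^ α := by
  have hxy : 0 < x + y := by linarith
  rw [split_pow _ α hxy, split_pow _ α hx, split_pow _ α hy, add_mul]
  have hx' : x ^ (α - 1) < (x + y) ^ (α - 1) :=
    Real.rpow_lt_rpow (le_of_lt hx) (by linarith) (by linarith)
  have hy' : y ^ (α - 1) < (x + y) ^ (α - 1) :=
    Real.rpow_lt_rpow (le_of_lt hy) (by linarith) (by linarith)
  nlinarith [hx, hy]

theorem g_sign_subregion3 (θ₁ θ₂ α : ℝ)
    (h1 : 0 < θ₂) (h2 : θ₂ < 1) (h3 : 0 < θ₁ + θ₂) (h4 : θ₁ - θ₂ < 1) :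
    (0 < α ∧ α < 1 →
      0 < 1 + |1 + θ₁| ^ α - 2 * |1 + θ₁ + θ₂| ^ α + |θ₁ + θ₂| ^ α + |θ₂| ^ α) ∧
    (α = 1 →
      1 + |1 + θ₁| ^ α - 2 * |1 + θ₁ + θ₂| ^ α + |θ₁ + θ₂| ^ α + |θ₂| ^ α = 0) ∧
    (1 < α ∧ α ≤ 2 →
      1 + |1 + θ₁| ^ α - 2 * |1 + θ₁ + θ₂| ^ α + |θ₁ + θ₂| ^ α + |θ₂| ^ α < 0) := by
  have p1 : 0 < 1 + θ₁ := by linarith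
  have p2 : 0 < 1 + θ₁ + θ₂ := by linarith
  rw [abs_of_pos p1, abs_of_pos p2, abs_of_pos h3, abs_of_pos h1]
  have e1 : (1 : ℝ) + θ₁ + θ₂ = 1 + (θ₁ + θ₂) := by ring
  have e2 : (1 : ℝ) + θ₁ + θ₂ = (1 + θ₁) + θ₂ := by ring
  refine ⟨fun ⟨ha, hb⟩ => ?_, fun ha => ?_, fun ⟨ha, _⟩ => ?_⟩
  · have k1 : (1 + (θ₁ + θ₂)) ^ α < 1 ^ α + (θ₁ + θ₂) ^ α :=
      strict_sub 1 (θ₁ + θ₂) α one_pos h3 ha hb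
    have k2 : ((1 + θ₁) + θ₂) ^ α < (1 + θ₁) ^ α + θ₂ ^ α :=
      strict_sub (1 + θ₁) θ₂ α p1 h1 ha hb
    rw [e1] at *
    simp [Real.one_rpow] at k1
    nlinarith [k1, k2]
  · subst ha; simp [Real.rpow_one]; ring
  · have k1 : 1 ^ α + (θ₁ + θ₂) ^ α < (1 + (θ₁ + θ₂)) ^ α :=
      strict_super 1 (θ₁ + θ₂) α one_pos h3 ha
    have k2 : (1 + θ₁) ^ α + θ₂ ^ α < ((1 + θ₁) + θ₂) ^ α :=
      strict_super (1 + θ₁) θ₂ α p1 h1 ha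
    rw [e1] at *
    simp [Real.one_rpow] at k1
    nlinarith [k1, k2]
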